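/- arXiv:2411.19600 — 2 statements merged into one kernel-verified Lean document; each statement's English description precedes it below -/
import Mathlib

section
/- Let M ∈ ℕ, let (Z_n)_{n∈ℕ} be i.i.d. uniform random variables on [−1/(2M), 1/(2M)), let y_n = {n/M} − 1/(2M) (fractional part), and set X_n = y_n + Z_n (mod 1). Then for every s > 0, lim_{k→∞} E[R(s, kM)] = 2s. -/
/-!
Modulo 1, `X i - X j ≡ (i - j) / M + (Z i - Z j)`, so for `i ≠ j` the probability that
`‖X i - X j‖ ≤ δ` is a function `g_δ (i - j)` (`jitterPairProb M δ`), `M`-periodic.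
Since `M * Z i` is uniform modulo 1, so is `M * (Z i - Z j)`, and once `2 M δ < 1` the events
`‖d / M + (Z i - Z j)‖ ≤ δ` for `d < M` partition `‖M (Z i - Z j)‖ ≤ M δ`; hence
`∑_{d < M} g_δ d = 2 M δ`. Summing over the off-diagonal pairs of `{1, …, kM}` with
`δ = s / (kM)` gives `E R(s, kM) = 2s - g_δ 0`, and `0 ≤ g_δ 0 ≤ 2s / k`.
-/

open MeasureTheory ProbabilityTheory Filter
open scoped ENNReal

/-- Distance of a real number to its nearest integer. -/

noncomputable def distToInt (x : ℝ) : ℝ := |x - round x|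

open Classical in

/-- Number of ordered pairs `(i, j)` with `1 ≤ i ≠ j ≤ N` and `‖x i - x j‖ ≤ δ`. -/

noncomputable def pairCount (x : ℕ → ℝ) (δ : ℝ) (N : ℕ) : ℕ :=
  ((Finset.Icc 1 N ×ˢ Finset.Icc 1 N).filter fun p =>
    p.1 ≠ p.2 ∧ distToInt (x p.1 - x p.2) ≤ δ).card

/-- The pair correlation statistic `R(s, N)`. -/

noncomputable def Rpair (x : ℕ → ℝ) (s : ℝ) (N : ℕ) : ℝ :=
  (pairCount x (s / N) N : ℝ) / N

/-- The weak pair correlation statistic `R_α(s, N)`. -/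

noncomputable def Ralpha (x : ℕ → ℝ) (α s : ℝ) (N : ℕ) : ℝ :=
  (pairCount x (s / (N : ℝ) ^ α) N : ℝ) / (N : ℝ) ^ (2 - α)

lemma distToInt_eq_norm (x : ℝ) : distToInt x = ‖(x : UnitAddCircle)‖ :=
  UnitAddCircle.norm_eq.symm

lemma continuous_distToInt : Continuous distToInt := by
  simp only [funext distToInt_eq_norm]
  exact continuous_norm.comp (AddCircle.continuous_mk' 1)

lemma measurable_distToInt : Measurable distToInt :=
  continuous_distToInt.measurable

lemma distToInt_le (x : ℝ) (z : ℤ) : distToInt x ≤ |x - z| := round_le x z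

lemma distToInt_add_intCast (x : ℝ) (z : ℤ) : distToInt (x + z) = distToInt x := by
  simp [distToInt_eq_norm]

lemma distToInt_sub_le (x y : ℝ) : distToInt (x - y) ≤ distToInt x + distToInt y := by
  simpa only [distToInt_eq_norm, AddCircle.coe_sub] using norm_sub_le _ _

lemma distToInt_natCast_mul_le (n : ℕ) (x : ℝ) : distToInt (n * x) ≤ n * distToInt x := by
  simpa only [distToInt_eq_norm, ← nsmul_eq_mul, AddCircle.coe_nsmul]
    using norm_nsmul_le (n := n) (a := (x : UnitAddCircle))

lemma intCast_dvd_of_distToInt_div_lt {M : ℕ} (hM : 0 < M) {n : ℤ}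
    (h : distToInt (n / M) < 1 / M) : (M : ℤ) ∣ n := by
  have hM' : (0 : ℝ) < M := by exact_mod_cast hM
  set r := round ((n : ℝ) / M)
  have hr : |(n : ℝ) - M * r| < 1 :=
    calc |(n : ℝ) - M * r| = |M * ((n : ℝ) / M - r)| := by congr 1; field_simp
      _ = M * distToInt (n / M) := by rw [abs_mul, abs_of_pos hM', distToInt]
      _ < 1 := by rwa [lt_div_iff₀ hM', mul_comm] at h
  have hr' : |n - M * r| < 1 := by exact_mod_cast hr
  rw [Int.abs_lt_one_iff, sub_eq_zero] at hr'
  exact ⟨r, hr'⟩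

lemma measurableSet_distToInt_le {α : Type*} [MeasurableSpace α] {f : α → ℝ} (hf : Measurable f)
    (δ : ℝ) : MeasurableSet {x | distToInt (f x) ≤ δ} :=
  measurableSet_le (measurable_distToInt.comp hf) measurable_const

lemma exists_distToInt_add_le_of_distToInt_mul_le {M : ℕ} (hM : 0 < M) {w δ : ℝ}
    (h : distToInt (M * w) ≤ M * δ) : ∃ d ∈ Finset.range M, distToInt (d / M + w) ≤ δ := by
  have hM' : (0 : ℝ) < M := by exact_mod_cast hM
  set r := round ((M : ℝ) * w)
  -- choose `d ≡ -r (mod M)`, so that `d / M + w` is within `|M w - r| / M` of the integer `q`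
  obtain ⟨d, hd, q, hq⟩ : ∃ d < M, ∃ q : ℤ, (d : ℤ) + r = M * q :=
    have h0 : 0 ≤ (-r) % M := Int.emod_nonneg _ (by omega)
    have h1 : (-r) % M < M := Int.emod_lt_of_pos _ (by omega)
    ⟨((-r) % M).toNat, by omega, -((-r) / M), by rw [Int.toNat_of_nonneg h0, Int.emod_def]; ring⟩
  refine ⟨d, Finset.mem_range.mpr hd, (distToInt_le _ q).trans ?_⟩
  have hq' : (d : ℝ) + r = M * q := by exact_mod_cast hq
  rw [show (d : ℝ) / M + w - q = (M * w - r) / M by field_simp; linarith, abs_div,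
    abs_of_pos hM', div_le_iff₀ hM', mul_comm δ]
  exact h

lemma distToInt_mul_le_iff_exists {M : ℕ} (hM : 0 < M) (w δ : ℝ) :
    distToInt (M * w) ≤ M * δ ↔ ∃ d ∈ Finset.range M, distToInt (d / M + w) ≤ δ := by
  refine ⟨exists_distToInt_add_le_of_distToInt_mul_le hM, ?_⟩
  rintro ⟨d, -, hd⟩
  have hM' : (M : ℝ) ≠ 0 := by exact_mod_cast hM.ne'
  calc distToInt (M * w) = distToInt (M * (d / M + w) + ((-d : ℤ) : ℝ)) := by
        congr 1; field_simp; push_cast; ring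
    _ ≤ M * distToInt (d / M + w) := by
        rw [distToInt_add_intCast]; exact distToInt_natCast_mul_le M _
    _ ≤ M * δ := by gcongr

lemma pairwiseDisjoint_distToInt_add_le {M : ℕ} (hM : 0 < M) {δ : ℝ} (hδ : 2 * M * δ < 1) :
    (Finset.range M : Set ℕ).PairwiseDisjoint fun d => {w : ℝ | distToInt (d / M + w) ≤ δ} := by
  intro d hd d' hd' hne
  refine Set.disjoint_left.mpr fun w hw hw' => hne ?_
  have hM' : (0 : ℝ) < M := by exact_mod_cast hM
  have hsmall : distToInt (((d - d' : ℤ) : ℝ) / M) < 1 / M := by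
    calc distToInt (((d - d' : ℤ) : ℝ) / M) = distToInt ((d / M + w) - (d' / M + w)) := by
          congr 1; push_cast; ring
      _ ≤ δ + δ := (distToInt_sub_le _ _).trans (add_le_add hw hw')
      _ < 1 / M := by rw [lt_div_iff₀ hM']; linarith
  simp only [Finset.coe_range, Set.mem_Iio] at hd hd'
  have := Int.eq_zero_of_abs_lt_dvd (intCast_dvd_of_distToInt_div_lt hM hsmall)
    (by rw [abs_lt]; omega)
  omega

namespace Function.Periodic

variable {α : Type*} {F : ℤ → α} {M : ℕ}

lemma sum_range_add [AddCommMonoid α] (hF : Periodic F M) (a : ℤ) :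
    ∑ d ∈ Finset.range M, F (a + d) = ∑ d ∈ Finset.range M, F d := by
  have hstep (b : ℤ) : ∑ d ∈ Finset.range M, F (b + 1 + d) = ∑ d ∈ Finset.range M, F (b + d) := by
    cases M with
    | zero => simp
    | succ n =>
      have hwrap : F (b + 1 + n) = F (b + 0) := by
        rw [add_zero, ← hF b]; push_cast; ring_nf
      rw [Finset.sum_range_succ, hwrap, Finset.sum_range_succ' (fun d => F (b + d))]
      congr 1
      exact Finset.sum_congr rfl fun d _ => by push_cast; ring_nf
  induction a using Int.induction_on with
  | zero => simp
  | succ i ih => rw [hstep, ih]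
  | pred i ih => rw [← ih, ← hstep]; ring_nf

lemma sum_range_mul_add [AddCommMonoid α] (hF : Periodic F M) (k : ℕ) (a : ℤ) :
    ∑ t ∈ Finset.range (k * M), F (a + t) = k • ∑ d ∈ Finset.range M, F d := by
  induction k with
  | zero => simp
  | succ k ih =>
    rw [add_mul, one_mul, Finset.sum_range_add, ih, succ_nsmul, ← hF.sum_range_add (a + ↑(k * M))]
    congr 1
    exact Finset.sum_congr rfl fun d _ => by push_cast; ring_nf

lemma sum_Icc_sub [AddCommMonoid α] (hF : Periodic F M) (k : ℕ) (j : ℤ) :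
    ∑ i ∈ Finset.Icc 1 (k * M), F (i - j) = k • ∑ d ∈ Finset.range M, F d := by
  rw [← Finset.Ico_add_one_right_eq_Icc, Finset.sum_Ico_eq_sum_range, Nat.add_sub_cancel,
    ← hF.sum_range_mul_add k (1 - j)]
  exact Finset.sum_congr rfl fun t _ => by push_cast; ring_nf

lemma sum_offDiag_Icc_sub [AddCommGroup α] (hF : Periodic F M) (k : ℕ) :
    ∑ p ∈ (Finset.Icc 1 (k * M)).offDiag, F (p.1 - p.2)
      = (k * M) • (k • ∑ d ∈ Finset.range M, F d - F 0) := by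
  have h := Finset.sum_union (Finset.disjoint_diag_offDiag (Finset.Icc 1 (k * M)))
    (f := fun p => F (p.1 - p.2))
  rw [Finset.diag_union_offDiag] at h
  rw [eq_sub_of_add_eq' h.symm, Finset.sum_product_right, Finset.sum_diag]
  simp only [hF.sum_Icc_sub, sub_self, Finset.sum_const, Nat.card_Icc, Nat.add_sub_cancel, smul_sub]

end Function.Periodic

noncomputable def jitterLaw (M : ℕ) : Measure ℝ :=
  (M : ℝ≥0∞) • volume.restrict (Set.Ico (-(1 / (2 * M)) : ℝ) (1 / (2 * M)))

lemma map_mul_jitterLaw (M : ℕ) [NeZero M] :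
    (jitterLaw M).map (fun v => (M : ℝ) * v) = volume.restrict (Set.Ico (-(1 / 2)) (1 / 2)) := by
  have hM : (0 : ℝ) < M := by exact_mod_cast Nat.pos_of_neZero M
  have hI : Set.Ico (-(1 / (2 * M)) : ℝ) (1 / (2 * M))
      = (fun v => (M : ℝ) * v) ⁻¹' Set.Ico (-(1 / 2)) (1 / 2) := by
    rw [Set.preimage_const_mul_Ico₀ _ _ hM]; congr 1 <;> field_simp
  rw [jitterLaw, Measure.map_smul, hI, ← (measurableEmbedding_mulLeft₀ hM.ne').restrict_map,
    Real.map_volume_mul_left hM.ne', Measure.restrict_smul, smul_smul,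
    abs_of_pos (inv_pos.mpr hM), ENNReal.ofReal_inv_of_pos hM, ENNReal.ofReal_natCast,
    ENNReal.mul_inv_cancel (by exact_mod_cast hM.ne') (ENNReal.natCast_ne_top M), one_smul]

lemma measurable_circle_mul (a : ℝ) : Measurable fun v : ℝ => ((a * v : ℝ) : UnitAddCircle) :=
  AddCircle.measurable_mk'.comp (measurable_const_mul a)

lemma map_circle_mul_jitterLaw (M : ℕ) [NeZero M] :
    (jitterLaw M).map (fun v => (((M : ℝ) * v : ℝ) : UnitAddCircle)) = volume := by
  rw [show (fun v => (((M : ℝ) * v : ℝ) : UnitAddCircle)) = (↑) ∘ (fun v => (M : ℝ) * v) from rfl,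
    ← Measure.map_map AddCircle.measurable_mk' (measurable_const_mul _), map_mul_jitterLaw,
    Measure.restrict_congr_set Ico_ae_eq_Ioc]
  have h := (UnitAddCircle.measurePreserving_mk (-(1 / 2))).map_eq
  rwa [show -(1 / 2 : ℝ) + 1 = 1 / 2 by norm_num] at h

instance (M : ℕ) [NeZero M] : IsProbabilityMeasure (jitterLaw M) := by
  constructor
  have h := congrArg (· Set.univ) (map_circle_mul_jitterLaw M)
  rw [Measure.map_apply (measurable_circle_mul _) MeasurableSet.univ, Set.preimage_univ] at h
  exact h.trans UnitAddCircle.measure_univ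

lemma jitterLaw_distToInt_mul_add_le (M : ℕ) [NeZero M] (c ε : ℝ) :
    jitterLaw M {v | distToInt (M * v + c) ≤ ε} = ENNReal.ofReal (min 1 (2 * ε)) := by
  have hset : {v | distToInt (M * v + c) ≤ ε} = (fun v => (((M : ℝ) * v : ℝ) : UnitAddCircle)) ⁻¹'
      Metric.closedBall ((-c : ℝ) : UnitAddCircle) ε := by
    ext v
    simp [distToInt_eq_norm, dist_eq_norm, sub_eq_add_neg]
  rw [hset, ← Measure.map_apply (measurable_circle_mul _) Metric.isClosed_closedBall.measurableSet,
    map_circle_mul_jitterLaw, AddCircle.volume_closedBall]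

lemma prod_jitterLaw_distToInt_mul_sub_le (M : ℕ) [NeZero M] (ε : ℝ) :
    ((jitterLaw M).prod (jitterLaw M)) {p | distToInt (M * (p.1 - p.2)) ≤ ε}
      = ENNReal.ofReal (min 1 (2 * ε)) := by
  rw [Measure.prod_apply_symm (measurableSet_distToInt_le (by fun_prop) ε)]
  have hslice (v : ℝ) : (fun u => (u, v)) ⁻¹' {p : ℝ × ℝ | distToInt (M * (p.1 - p.2)) ≤ ε}
      = {u | distToInt (M * u + -(M * v)) ≤ ε} := by
    ext u; simp only [Set.mem_preimage, Set.mem_ofPred_eq, sub_eq_add_neg, mul_add, mul_neg]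
  simp only [hslice, jitterLaw_distToInt_mul_add_le, lintegral_const, measure_univ, mul_one]

noncomputable def jitterPairProb (M : ℕ) (δ : ℝ) (m : ℤ) : ℝ :=
  ((jitterLaw M).prod (jitterLaw M)).real {p | distToInt (m / M + (p.1 - p.2)) ≤ δ}

lemma jitterPairProb_periodic (M : ℕ) [NeZero M] (δ : ℝ) :
    Function.Periodic (jitterPairProb M δ) M := by
  intro m
  have hM : (M : ℝ) ≠ 0 := NeZero.ne _
  simp only [jitterPairProb]
  congr 2 with p
  rw [show ((m + M : ℤ) : ℝ) / M + (p.1 - p.2) = (m / M + (p.1 - p.2) : ℝ) + ((1 : ℤ) : ℝ) by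
    push_cast; field_simp; ring, distToInt_add_intCast]

lemma sum_range_jitterPairProb (M : ℕ) [NeZero M] {δ : ℝ} (hδ₀ : 0 ≤ δ) (hδ : 2 * M * δ < 1) :
    ∑ d ∈ Finset.range M, jitterPairProb M δ d = 2 * M * δ := by
  have hM := Nat.pos_of_neZero M
  have hunion : ⋃ d ∈ Finset.range M, {p : ℝ × ℝ | distToInt (d / M + (p.1 - p.2)) ≤ δ}
      = {p | distToInt (M * (p.1 - p.2)) ≤ M * δ} := by
    ext p; simp [distToInt_mul_le_iff_exists hM]
  have hdisj := pairwiseDisjoint_distToInt_add_le hM hδ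
  simp only [jitterPairProb, Int.cast_natCast]
  rw [← measureReal_biUnion_finset
    (f := fun d : ℕ => {p : ℝ × ℝ | distToInt (d / M + (p.1 - p.2)) ≤ δ})
    (fun d hd d' hd' hne => (hdisj hd hd' hne).preimage (fun p : ℝ × ℝ => p.1 - p.2))
    (fun d _ => measurableSet_distToInt_le (by fun_prop) δ), hunion, measureReal_def,
    prod_jitterLaw_distToInt_mul_sub_le, min_eq_right (by linarith),
    ENNReal.toReal_ofReal (by positivity)]
  ring

lemma jitterPairProb_zero_le_sum (M : ℕ) [NeZero M] (δ : ℝ) :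
    jitterPairProb M δ 0 ≤ ∑ d ∈ Finset.range M, jitterPairProb M δ d :=
  Finset.single_le_sum (f := fun d : ℕ => jitterPairProb M δ d)
    (fun _ _ => measureReal_nonneg) (Finset.mem_range.mpr (Nat.pos_of_neZero M))

lemma sum_range_jitterPairProb_batch (M : ℕ) [NeZero M] {s : ℝ} (hs : 0 ≤ s) {k : ℕ}
    (hk : 2 * s < k) :
    ∑ d ∈ Finset.range M, jitterPairProb M (s / (k * M : ℕ)) d = 2 * s / k := by
  have hk0 : (0 : ℝ) < k := by linarith
  have hM0 : (0 : ℝ) < M := by exact_mod_cast Nat.pos_of_neZero M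
  have hδ : 2 * M * (s / (k * M : ℕ)) = 2 * s / k := by push_cast; field_simp
  rw [sum_range_jitterPairProb M (by positivity) (by rw [hδ, div_lt_one hk0]; exact hk), hδ]

lemma distToInt_jittered_sub {M : ℕ} {X Z : ℕ → ℝ}
    (hX : ∀ n, X n = Int.fract (Int.fract ((n : ℝ) / M) - 1 / (2 * M) + Z n)) (i j : ℕ) :
    distToInt (X i - X j) = distToInt (((i - j : ℤ) : ℝ) / M + (Z i - Z j)) := by
  simp only [distToInt_eq_norm, hX, AddCircle.coe_sub, AddCircle.coe_add, AddCircle.coe_fract,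
    Int.cast_sub, Int.cast_natCast, sub_div]
  abel_nf

lemma integral_Rpair {Ω : Type*} [MeasurableSpace Ω] {P : Measure Ω} [IsFiniteMeasure P]
    {X : ℕ → Ω → ℝ} (hX : ∀ n, Measurable (X n)) (s : ℝ) (N : ℕ) :
    ∫ ω, Rpair (fun n => X n ω) s N ∂P
      = (∑ p ∈ (Finset.Icc 1 N).offDiag,
          P.real {ω | distToInt (X p.1 ω - X p.2 ω) ≤ s / N}) / N := by
  have hmeas (p : ℕ × ℕ) : MeasurableSet {ω | distToInt (X p.1 ω - X p.2 ω) ≤ s / N} :=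
    measurableSet_distToInt_le ((hX p.1).sub (hX p.2)) _
  have hcount (ω : Ω) : (pairCount (fun n => X n ω) (s / N) N : ℝ) = ∑ p ∈ (Finset.Icc 1 N).offDiag,
      {ω | distToInt (X p.1 ω - X p.2 ω) ≤ s / N}.indicator 1 ω := by
    classical
    have hoff : (Finset.Icc 1 N).offDiag = (Finset.Icc 1 N ×ˢ Finset.Icc 1 N).filter
        fun p => p.1 ≠ p.2 := by
      ext; simp [and_assoc]
    rw [pairCount, Finset.natCast_card_filter, hoff, Finset.sum_filter]
    refine Finset.sum_congr rfl fun p _ => ?_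
    by_cases hp : p.1 = p.2 <;> simp [hp, Set.indicator_apply]
  simp only [Rpair, hcount]
  rw [integral_div, integral_finsetSum _ fun p _ => (integrable_const 1).indicator (hmeas p)]
  simp only [integral_indicator_one (hmeas _)]

lemma measureReal_distToInt_jittered_sub_le {Ω : Type*} [MeasurableSpace Ω] {P : Measure Ω}
    [IsFiniteMeasure P] {M : ℕ} {Z X : ℕ → Ω → ℝ} (hZmeas : ∀ n, Measurable (Z n))
    (hZindep : iIndepFun Z P) (hZdist : ∀ n, P.map (Z n) = jitterLaw M)
    (hX : ∀ n ω, X n ω = Int.fract (Int.fract ((n : ℝ) / M) - 1 / (2 * M) + Z n ω))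
    {i j : ℕ} (hij : i ≠ j) (δ : ℝ) :
    P.real {ω | distToInt (X i ω - X j ω) ≤ δ} = jitterPairProb M δ (i - j) := by
  have hset : {ω | distToInt (X i ω - X j ω) ≤ δ} = (fun ω => (Z i ω, Z j ω)) ⁻¹'
      {p | distToInt (((i - j : ℤ) : ℝ) / M + (p.1 - p.2)) ≤ δ} := by
    ext ω; simp [distToInt_jittered_sub (fun n => hX n ω)]
  have hlaw : P.map (fun ω => (Z i ω, Z j ω)) = (jitterLaw M).prod (jitterLaw M) := by
    rw [(indepFun_iff_map_prod_eq_prod_map_map (hZmeas i).aemeasurable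
      (hZmeas j).aemeasurable).mp (hZindep.indepFun hij), hZdist, hZdist]
  rw [jitterPairProb, measureReal_def, measureReal_def, hset,
    ← Measure.map_apply ((hZmeas i).prodMk (hZmeas j)) (measurableSet_distToInt_le (by fun_prop) δ),
    hlaw]

lemma integral_Rpair_jittered {Ω : Type*} [MeasurableSpace Ω] {P : Measure Ω}
    [IsProbabilityMeasure P] {M : ℕ} [NeZero M] {Z X : ℕ → Ω → ℝ}
    (hZmeas : ∀ n, Measurable (Z n)) (hZindep : iIndepFun Z P)
    (hZdist : ∀ n, P.map (Z n) = jitterLaw M)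
    (hX : ∀ n ω, X n ω = Int.fract (Int.fract ((n : ℝ) / M) - 1 / (2 * M) + Z n ω))
    {s : ℝ} (hs : 0 ≤ s) {k : ℕ} (hk : 2 * s < k) :
    ∫ ω, Rpair (fun n => X n ω) s (k * M) ∂P
      = 2 * s - jitterPairProb M (s / (k * M : ℕ)) 0 := by
  have hXmeas (n : ℕ) : Measurable (X n) := by
    rw [funext (hX n)]; exact ((hZmeas n).const_add _).fract
  have hk0 : (0 : ℝ) < k := by linarith
  have hM0 : (0 : ℝ) < M := by exact_mod_cast Nat.pos_of_neZero M
  rw [integral_Rpair hXmeas, Finset.sum_congr rfl fun p hp =>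
      measureReal_distToInt_jittered_sub_le hZmeas hZindep hZdist hX
        (Finset.mem_offDiag.mp hp).2.2 _,
    (jitterPairProb_periodic M _).sum_offDiag_Icc_sub k, sum_range_jitterPairProb_batch M hs hk,
    nsmul_eq_mul, nsmul_eq_mul]
  push_cast
  field_simp

/-- For the decomposed `M`-batch jittered sample `X n = {y n + Z n}` with
`y n = {n/M} - 1/(2M)` and `Z n` i.i.d. uniform on `[-1/(2M), 1/(2M))`, the
expected pair correlation statistic along batch sizes `N = kM` converges to `2s`. -/
theorem mBatchDecomposition_expectation_tendsto
    {Ω : Type*} [MeasurableSpace Ω] (P : Measure Ω) [IsProbabilityMeasure P]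
    (M : ℕ) (hM : 0 < M)
    (Z : ℕ → Ω → ℝ) (hZmeas : ∀ n, Measurable (Z n))
    (hZindep : iIndepFun Z P)
    (hZdist : ∀ n, Measure.map (Z n) P
      = (M : ℝ≥0∞) • volume.restrict (Set.Ico (-(1 / (2 * M)) : ℝ) (1 / (2 * M))))
    (X : ℕ → Ω → ℝ)
    (hX : ∀ n ω, X n ω = Int.fract (Int.fract ((n : ℝ) / M) - 1 / (2 * M) + Z n ω))
    (s : ℝ) (hs : 0 < s) :
    Tendsto (fun k => ∫ ω, Rpair (fun n => X n ω) s (k * M) ∂P) atTop (nhds (2 * s)) := by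
  have : NeZero M := ⟨hM.ne'⟩
  set g : ℕ → ℝ := fun k => jitterPairProb M (s / (k * M : ℕ)) 0
  have hlarge : ∀ᶠ k : ℕ in atTop, 2 * s < k :=
    (eventually_gt_atTop ⌈2 * s⌉₊).mono fun k hk => Nat.lt_of_ceil_lt hk
  have hE : ∀ᶠ k : ℕ in atTop, 2 * s - g k = ∫ ω, Rpair (fun n => X n ω) s (k * M) ∂P :=
    hlarge.mono fun k hk => (integral_Rpair_jittered hZmeas hZindep hZdist hX hs.le hk).symm
  have hg : Tendsto g atTop (nhds 0) :=
    squeeze_zero' (.of_forall fun k => measureReal_nonneg)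
      (hlarge.mono fun k hk => sum_range_jitterPairProb_batch M hs.le hk ▸
        jitterPairProb_zero_le_sum M _)
      (tendsto_const_div_atTop_nhds_zero_nat (2 * s))
  simpa using (tendsto_const_nhds.sub hg).congr' hE
end

section
/- Let (X_n)_{n∈ℕ} be a sequential jittered sampling sequence, α ∈ (0,1) and s > 0. Then E[ Σ_{1≤i,j,k≤N distinct} 1{‖X_i − X_j‖ ≤ s/N^α} · 1{‖X_i − X_k‖ ≤ s/N^α} ] = O(N^{3−α}), with implied constant depending only on s and α. -/
open MeasureTheory ProbabilityTheory Filter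
open scoped ENNReal

open Classical in
/-- Indices `j < 2^(n+1)` such that the dyadic cell `[j/2^(n+1), (j+1)/2^(n+1))`
contains none of the points `x 1, …, x (2^n)`. -/
noncomputable def emptyCells (x : ℕ → ℝ) (n : ℕ) : Finset ℕ :=
  (Finset.range (2 ^ (n + 1))).filter fun j =>
    ∀ i ∈ Finset.Icc 1 (2 ^ n),
      x i ∉ Set.Ico ((j : ℝ) / 2 ^ (n + 1)) (((j : ℝ) + 1) / 2 ^ (n + 1))

/-- The `k`-th (0-based, in increasing order) empty dyadic cell index. -/
noncomputable def cellOf (x : ℕ → ℝ) (n k : ℕ) : ℕ :=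
  ((emptyCells x n).sort (· ≤ ·)).getD k 0

/-- Codomains of the randomness used by sequential jittered sampling. -/
def jitterType : (Unit ⊕ ℕ ⊕ ℕ × ℕ) → Type
  | Sum.inl _ => Bool
  | Sum.inr (Sum.inl m) => Equiv.Perm (Fin (2 ^ m))
  | Sum.inr (Sum.inr _) => ℝ

noncomputable def jitterMeas : ∀ i, MeasurableSpace (jitterType i)
  | Sum.inl _ => inferInstanceAs (MeasurableSpace Bool)
  | Sum.inr (Sum.inl _) => ⊤
  | Sum.inr (Sum.inr _) => inferInstanceAs (MeasurableSpace ℝ)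

def jitterFam {Ω : Type*} (B : Ω → Bool) (π : (m : ℕ) → Ω → Equiv.Perm (Fin (2 ^ m)))
    (Z : ℕ → ℕ → Ω → ℝ) : ∀ i, Ω → jitterType i
  | Sum.inl _ => B
  | Sum.inr (Sum.inl m) => π m
  | Sum.inr (Sum.inr p) => Z p.1 p.2

/-- `X` is a sequential jittered sampling sequence (indices starting at 1) on `(Ω, P)`. -/
def IsSeqJitter {Ω : Type*} [MeasurableSpace Ω] (P : Measure Ω) (X : ℕ → Ω → ℝ) : Prop :=
  IsProbabilityMeasure P ∧
  ∃ (B : Ω → Bool) (π : (m : ℕ) → Ω → Equiv.Perm (Fin (2 ^ m))) (Z : ℕ → ℕ → Ω → ℝ),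
    Measurable B ∧ (∀ m, @Measurable _ _ _ ⊤ (π m)) ∧ (∀ m k, Measurable (Z m k)) ∧
    iIndepFun (m := jitterMeas) (jitterFam B π Z) P ∧
    P {ω | B ω = true} = 1 / 2 ∧
    (∀ (m : ℕ) (e : Equiv.Perm (Fin (2 ^ m))),
      P {ω | π m ω = e} = ((Nat.factorial (2 ^ m) : ℝ≥0∞))⁻¹) ∧
    (∀ m k, Measure.map (Z m k) P = volume.restrict (Set.Ico (0 : ℝ) 1)) ∧
    (∀ ω, X 1 ω = (if B ω then 0 else 1 / 2) + Z 0 0 ω / 2) ∧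
    (∀ ω, X 2 ω = (if B ω then 1 / 2 else 0) + Z 0 1 ω / 2) ∧
    (∀ n : ℕ, 1 ≤ n → ∀ k : Fin (2 ^ n), ∀ ω : Ω,
      X (2 ^ n + (k : ℕ) + 1) ω =
        (cellOf (fun i => X i ω) n ((π n ω k : Fin (2 ^ n)) : ℕ) : ℝ) / 2 ^ (n + 1)
          + Z n (k : ℕ) ω / 2 ^ (n + 1))

open Classical in
/-- Number of triples `(i, j, k)` of distinct indices in `{1, …, N}` with
`‖x i - x j‖ ≤ δ` and `‖x i - x k‖ ≤ δ`. -/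
noncomputable def tripleCount (x : ℕ → ℝ) (δ : ℝ) (N : ℕ) : ℕ :=
  ((Finset.Icc 1 N ×ˢ Finset.Icc 1 N ×ˢ Finset.Icc 1 N).filter fun t =>
    t.1 ≠ t.2.1 ∧ t.1 ≠ t.2.2 ∧ t.2.1 ≠ t.2.2 ∧
      distToInt (x t.1 - x t.2.1) ≤ δ ∧ distToInt (x t.1 - x t.2.2) ≤ δ).card


/-!
Sequential jittered sampling is almost surely dyadically stratified: for every `n`, the first
`2 ^ n` points lie in pairwise distinct cells `[j / 2 ^ n, (j + 1) / 2 ^ n)`, because each new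
generation fills exactly the cells left empty by the previous one. Taking `2 ^ n ≈ N`, every
point then has `O(δ 2 ^ n + 1) = O(N ^ (1 - α))` neighbours at circular distance `≤ δ = s / N ^ α`,
so the number of triples is at most `N · O(N ^ (1 - α)) ^ 2 = O(N ^ (3 - 2α))` for every outcome,
not only in expectation.
-/

def IsDyadicStratified (x : ℕ → ℝ) (n : ℕ) : Prop :=
  (∀ i ∈ Finset.Icc 1 (2 ^ n), x i ∈ Set.Ico (0 : ℝ) 1) ∧
    Set.InjOn (fun i => ⌊x i * 2 ^ n⌋₊) (Finset.Icc 1 (2 ^ n))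

lemma mem_Ico_div_iff_floor_mul_eq {y r : ℝ} (hy : 0 ≤ y) (hr : 0 < r) (j : ℕ) :
    y ∈ Set.Ico ((j : ℝ) / r) (((j : ℝ) + 1) / r) ↔ ⌊y * r⌋₊ = j := by
  rw [Set.mem_Ico, Nat.floor_eq_iff (by positivity), div_le_iff₀ hr, lt_div_iff₀ hr]

lemma floor_div_pow_add_div_pow {c m : ℕ} {z : ℝ} (hz : z ∈ Set.Ico (0 : ℝ) 1) :
    ⌊((c : ℝ) / 2 ^ m + z / 2 ^ m) * 2 ^ m⌋₊ = c := by
  rw [← add_div, div_mul_cancel₀ _ (by positivity), Nat.floor_eq_iff (by linarith [hz.1])]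
  exact ⟨by linarith [hz.1], by linarith [hz.2]⟩

lemma div_pow_add_div_pow_mem_Ico {c m : ℕ} (hc : c < 2 ^ m) {z : ℝ}
    (hz : z ∈ Set.Ico (0 : ℝ) 1) : (c : ℝ) / 2 ^ m + z / 2 ^ m ∈ Set.Ico (0 : ℝ) 1 := by
  have hc' : (c : ℝ) + 1 ≤ 2 ^ m := by exact_mod_cast hc
  rw [← add_div, Set.mem_Ico, le_div_iff₀ (by positivity), div_lt_one (by positivity)]
  constructor <;> linarith [hz.1, hz.2]

lemma floor_mul_two_pow_eq_div_two (y : ℝ) (m : ℕ) :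
    ⌊y * 2 ^ m⌋₊ = ⌊y * 2 ^ (m + 1)⌋₊ / 2 := by
  rw [← Nat.floor_div_natCast]
  congr 1
  push_cast
  ring

lemma mem_Icc_two_pow_succ {n i : ℕ} (hi : i ∈ Finset.Icc 1 (2 ^ (n + 1))) :
    i ∈ Finset.Icc 1 (2 ^ n) ∨ ∃ k : Fin (2 ^ n), i = 2 ^ n + k + 1 := by
  rw [Finset.mem_Icc, pow_succ] at hi
  rcases le_or_gt i (2 ^ n) with hle | hgt
  · exact Or.inl (Finset.mem_Icc.2 ⟨hi.1, hle⟩)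
  · exact Or.inr ⟨⟨i - 2 ^ n - 1, by omega⟩, by simp only; omega⟩

namespace IsDyadicStratified

variable {x : ℕ → ℝ} {n : ℕ}

lemma injOn_floor_succ (h : IsDyadicStratified x n) :
    Set.InjOn (fun i => ⌊x i * 2 ^ (n + 1)⌋₊) (Finset.Icc 1 (2 ^ n)) := by
  intro i hi j hj hij
  apply h.2 hi hj
  simp only [floor_mul_two_pow_eq_div_two _ n]
  exact congrArg (· / 2) hij

lemma floor_notMem_emptyCells (h : IsDyadicStratified x n) {i : ℕ}
    (hi : i ∈ Finset.Icc 1 (2 ^ n)) : ⌊x i * 2 ^ (n + 1)⌋₊ ∉ emptyCells x n := by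
  simp only [emptyCells, Finset.mem_filter, not_and, not_forall, not_not]
  exact fun _ => ⟨i, hi, (mem_Ico_div_iff_floor_mul_eq (h.1 i hi).1 (by positivity) _).2 rfl⟩

lemma emptyCells_eq_sdiff (h : IsDyadicStratified x n) :
    emptyCells x n = Finset.range (2 ^ (n + 1)) \
      (Finset.Icc 1 (2 ^ n)).image fun i => ⌊x i * 2 ^ (n + 1)⌋₊ := by
  ext j
  simp only [emptyCells, Finset.mem_filter, Finset.mem_sdiff, Finset.mem_image, not_exists,
    not_and]
  refine and_congr_right fun _ => forall₂_congr fun i hi => ?_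
  rw [mem_Ico_div_iff_floor_mul_eq (h.1 i hi).1 (by positivity)]

lemma card_emptyCells (h : IsDyadicStratified x n) : (emptyCells x n).card = 2 ^ n := by
  have hsub : (Finset.Icc 1 (2 ^ n)).image (fun i => ⌊x i * 2 ^ (n + 1)⌋₊) ⊆
      Finset.range (2 ^ (n + 1)) := by
    simp only [Finset.image_subset_iff, Finset.mem_range]
    intro i hi
    obtain ⟨hx0, hx1⟩ := h.1 i hi
    rw [Nat.floor_lt (by positivity)]
    push_cast
    nlinarith [pow_pos (two_pos : (0 : ℝ) < 2) (n + 1)]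
  rw [h.emptyCells_eq_sdiff, Finset.card_sdiff_of_subset hsub,
    Finset.card_image_of_injOn h.injOn_floor_succ, Finset.card_range, Nat.card_Icc, pow_succ]
  omega

lemma lt_length_sort_emptyCells (h : IsDyadicStratified x n) (k : Fin (2 ^ n)) :
    (k : ℕ) < ((emptyCells x n).sort (· ≤ ·)).length := by
  rw [Finset.length_sort, h.card_emptyCells]
  exact k.isLt

lemma cellOf_mem_emptyCells (h : IsDyadicStratified x n) (k : Fin (2 ^ n)) :
    cellOf x n k ∈ emptyCells x n := by
  rw [cellOf, List.getD_eq_getElem _ _ (h.lt_length_sort_emptyCells k),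
    ← Finset.mem_sort (· ≤ ·)]
  exact List.getElem_mem _

lemma cellOf_injective (h : IsDyadicStratified x n) :
    Function.Injective fun k : Fin (2 ^ n) => cellOf x n k := by
  intro k k' hkk'
  simp only [cellOf, List.getD_eq_getElem _ _ (h.lt_length_sort_emptyCells k),
    List.getD_eq_getElem _ _ (h.lt_length_sort_emptyCells k')] at hkk'
  exact Fin.ext ((Finset.sort_nodup _ _).getElem_inj_iff.1 hkk')

lemma cellOf_lt (h : IsDyadicStratified x n) (k : Fin (2 ^ n)) :
    cellOf x n k < 2 ^ (n + 1) := by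
  have hk := h.cellOf_mem_emptyCells k
  simp only [emptyCells, Finset.mem_filter, Finset.mem_range] at hk
  exact hk.1

lemma succ (h : IsDyadicStratified x n) (e : Equiv.Perm (Fin (2 ^ n))) (z : ℕ → ℝ)
    (hz : ∀ k, z k ∈ Set.Ico (0 : ℝ) 1)
    (hnew : ∀ k : Fin (2 ^ n), x (2 ^ n + k + 1) =
      (cellOf x n (e k) : ℝ) / 2 ^ (n + 1) + z k / 2 ^ (n + 1)) :
    IsDyadicStratified x (n + 1) := by
  have hfloor (k : Fin (2 ^ n)) : ⌊x (2 ^ n + k + 1) * 2 ^ (n + 1)⌋₊ = cellOf x n (e k) := by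
    rw [hnew]; exact floor_div_pow_add_div_pow (hz k)
  have hfloor_mem (k : Fin (2 ^ n)) :
      ⌊x (2 ^ n + k + 1) * 2 ^ (n + 1)⌋₊ ∈ emptyCells x n := by
    rw [hfloor]; exact h.cellOf_mem_emptyCells (e k)
  refine ⟨fun i hi => ?_, fun i hi j hj hij => ?_⟩
  · rcases mem_Icc_two_pow_succ hi with hold | ⟨k, rfl⟩
    · exact h.1 i hold
    · rw [hnew]; exact div_pow_add_div_pow_mem_Ico (h.cellOf_lt (e k)) (hz k)
  · simp only at hij
    rcases mem_Icc_two_pow_succ hi with holdi | ⟨k, rfl⟩ <;>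
      rcases mem_Icc_two_pow_succ hj with holdj | ⟨k', rfl⟩
    · exact h.injOn_floor_succ holdi holdj hij
    · exact absurd (by rw [hij]; exact hfloor_mem k') (h.floor_notMem_emptyCells holdi)
    · exact absurd (by rw [← hij]; exact hfloor_mem k) (h.floor_notMem_emptyCells holdj)
    · rw [hfloor, hfloor] at hij
      rw [e.injective (h.cellOf_injective hij)]

end IsDyadicStratified

lemma isDyadicStratified_zero_one {x : ℕ → ℝ} (b : Bool) {z₀ z₁ : ℝ}
    (hz₀ : z₀ ∈ Set.Ico (0 : ℝ) 1) (hz₁ : z₁ ∈ Set.Ico (0 : ℝ) 1)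
    (h₁ : x 1 = (if b then 0 else 1 / 2) + z₀ / 2)
    (h₂ : x 2 = (if b then 1 / 2 else 0) + z₁ / 2) :
    IsDyadicStratified x 0 ∧ IsDyadicStratified x 1 := by
  have hcell (c : ℕ) (hc : c < 2) {y z : ℝ} (hz : z ∈ Set.Ico (0 : ℝ) 1)
      (hy : y = (c : ℝ) / 2 ^ 1 + z / 2 ^ 1) : y ∈ Set.Ico (0 : ℝ) 1 ∧ ⌊y * 2 ^ 1⌋₊ = c :=
    hy ▸ ⟨div_pow_add_div_pow_mem_Ico hc hz, floor_div_pow_add_div_pow hz⟩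
  obtain ⟨⟨hx₁, hf₁⟩, ⟨hx₂, hf₂⟩⟩ : (x 1 ∈ Set.Ico (0 : ℝ) 1 ∧ ⌊x 1 * 2 ^ 1⌋₊ = if b then 0 else 1)
      ∧ (x 2 ∈ Set.Ico (0 : ℝ) 1 ∧ ⌊x 2 * 2 ^ 1⌋₊ = if b then 1 else 0) := by
    cases b
    · exact ⟨hcell 1 one_lt_two hz₀ (by rw [h₁]; norm_num),
        hcell 0 two_pos hz₁ (by rw [h₂]; norm_num)⟩
    · exact ⟨hcell 0 two_pos hz₀ (by rw [h₁]; norm_num),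
        hcell 1 one_lt_two hz₁ (by rw [h₂]; norm_num)⟩
  have hIcc : Finset.Icc 1 (2 ^ 1) = {1, 2} := by decide
  refine ⟨⟨fun i hi => ?_, ?_⟩, ⟨fun i hi => ?_, ?_⟩⟩
  · rw [pow_zero, Finset.Icc_self, Finset.mem_singleton] at hi
    exact hi ▸ hx₁
  · simp
  · rw [hIcc] at hi
    simp only [Finset.mem_insert, Finset.mem_singleton] at hi
    rcases hi with rfl | rfl
    exacts [hx₁, hx₂]
  · rw [hIcc, Finset.coe_pair, Set.injOn_pair]
    simp only [hf₁, hf₂]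
    cases b <;> simp

lemma isDyadicStratified_of_jitter {x : ℕ → ℝ} (b : Bool) (z : ℕ → ℕ → ℝ)
    (e : (m : ℕ) → Equiv.Perm (Fin (2 ^ m))) (hz : ∀ m k, z m k ∈ Set.Ico (0 : ℝ) 1)
    (h₁ : x 1 = (if b then 0 else 1 / 2) + z 0 0 / 2)
    (h₂ : x 2 = (if b then 1 / 2 else 0) + z 0 1 / 2)
    (hrec : ∀ n : ℕ, 1 ≤ n → ∀ k : Fin (2 ^ n),
      x (2 ^ n + k + 1) = (cellOf x n (e n k) : ℝ) / 2 ^ (n + 1) + z n k / 2 ^ (n + 1))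
    (n : ℕ) : IsDyadicStratified x n := by
  have hbase := isDyadicStratified_zero_one b (hz 0 0) (hz 0 1) h₁ h₂
  induction n with
  | zero => exact hbase.1
  | succ m ih =>
    rcases Nat.eq_zero_or_pos m with rfl | hm
    · exact hbase.2
    · exact ih.succ (e m) (z m) (hz m) (hrec m hm)

lemma round_sub_mem_Icc {a b : ℝ} (ha : a ∈ Set.Ico (0 : ℝ) 1) (hb : b ∈ Set.Ico (0 : ℝ) 1) :
    round (a - b) ∈ Finset.Icc (-1 : ℤ) 1 := by
  have hr := abs_sub_round (a - b)
  rw [abs_le] at hr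
  obtain ⟨ha0, ha1⟩ := ha
  obtain ⟨hb0, hb1⟩ := hb
  have hlo : ((-2 : ℤ) : ℝ) < round (a - b) := by push_cast; linarith
  have hhi : (round (a - b) : ℝ) < (2 : ℤ) := by push_cast; linarith
  rw [Int.cast_lt] at hlo hhi
  rw [Finset.mem_Icc]
  omega

lemma card_le_of_injOn_floor {ι : Type*} {s : Finset ι} {g : ι → ℝ} {a b : ℝ} (hab : a ≤ b)
    (hinj : Set.InjOn (fun i => ⌊g i⌋) s) (hg : ∀ i ∈ s, g i ∈ Set.Icc a b) :
    (s.card : ℝ) ≤ b - a + 2 := by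
  have hsub : s.image (fun i => ⌊g i⌋) ⊆ Finset.Icc ⌊a⌋ ⌊b⌋ := by
    simp only [Finset.image_subset_iff, Finset.mem_Icc]
    exact fun i hi => ⟨Int.floor_mono (hg i hi).1, Int.floor_mono (hg i hi).2⟩
  have hcard := Finset.card_image_of_injOn hinj ▸ Finset.card_le_card hsub
  rw [Int.card_Icc] at hcard
  have hfl : ⌊a⌋ ≤ ⌊b⌋ := Int.floor_mono hab
  have hcard' : (s.card : ℤ) ≤ ⌊b⌋ + 1 - ⌊a⌋ := by omega
  have : (s.card : ℝ) ≤ ⌊b⌋ + 1 - ⌊a⌋ := by exact_mod_cast hcard'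
  linarith [Int.floor_le b, Int.sub_one_lt_floor a]

/-- The circular `δ`-neighbourhood of `a` lifts to three intervals of length `2 δ`, each
meeting at most `2 δ 2 ^ n + 2` dyadic cells of level `n`. -/
lemma card_filter_distToInt_le {x : ℕ → ℝ} {n : ℕ} {S : Finset ℕ}
    (hx : ∀ j ∈ S, x j ∈ Set.Ico (0 : ℝ) 1) (hinj : Set.InjOn (fun j => ⌊x j * 2 ^ n⌋₊) S)
    {a : ℝ} (ha : a ∈ Set.Ico (0 : ℝ) 1) {δ : ℝ} (hδ : 0 ≤ δ) :
    ((S.filter fun j => distToInt (a - x j) ≤ δ).card : ℝ) ≤ 3 * (2 * δ * 2 ^ n + 2) := by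
  set lift : ℤ → Finset ℕ := fun m =>
    S.filter fun j => x j * 2 ^ n ∈ Set.Icc ((a - m - δ) * 2 ^ n) ((a - m + δ) * 2 ^ n)
  have hsub : (S.filter fun j => distToInt (a - x j) ≤ δ) ⊆
      (Finset.Icc (-1 : ℤ) 1).biUnion lift := by
    intro j hj
    rw [Finset.mem_filter, distToInt, abs_le] at hj
    refine Finset.mem_biUnion.2 ⟨_, round_sub_mem_Icc ha (hx j hj.1), Finset.mem_filter.2
      ⟨hj.1, ?_, ?_⟩⟩ <;> gcongr <;> linarith [hj.2.1, hj.2.2]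
  have hinjZ : Set.InjOn (fun j => ⌊x j * 2 ^ n⌋) S := by
    intro i hi j hj hij
    apply hinj hi hj
    simp only at hij ⊢
    rwa [← Int.natCast_floor_eq_floor (by have := (hx i hi).1; positivity),
      ← Int.natCast_floor_eq_floor (by have := (hx j hj).1; positivity), Nat.cast_inj] at hij
  have hlift (m : ℤ) : ((lift m).card : ℝ) ≤ 2 * δ * 2 ^ n + 2 := by
    have := card_le_of_injOn_floor (a := (a - m - δ) * 2 ^ n) (b := (a - m + δ) * 2 ^ n)
      (by gcongr; linarith) (hinjZ.mono (Finset.filter_subset _ S))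
      (fun j hj => (Finset.mem_filter.1 hj).2)
    linarith
  calc ((S.filter fun j => distToInt (a - x j) ≤ δ).card : ℝ)
      ≤ ∑ m ∈ Finset.Icc (-1 : ℤ) 1, ((lift m).card : ℝ) := by
        exact_mod_cast (Finset.card_le_card hsub).trans Finset.card_biUnion_le
    _ ≤ ∑ _m ∈ Finset.Icc (-1 : ℤ) 1, (2 * δ * 2 ^ n + 2) := Finset.sum_le_sum fun m _ => hlift m
    _ = 3 * (2 * δ * 2 ^ n + 2) := by simp; ring

lemma tripleCount_le_sum_sq (x : ℕ → ℝ) (δ : ℝ) (N : ℕ) :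
    tripleCount x δ N ≤ ∑ i ∈ Finset.Icc 1 N,
      ((Finset.Icc 1 N).filter fun j => distToInt (x i - x j) ≤ δ).card ^ 2 := by
  set nbhd : ℕ → Finset ℕ := fun i => (Finset.Icc 1 N).filter fun j => distToInt (x i - x j) ≤ δ
  calc tripleCount x δ N
      ≤ ((Finset.Icc 1 N).biUnion fun i => {i} ×ˢ (nbhd i ×ˢ nbhd i)).card := by
        refine Finset.card_le_card fun t ht => ?_
        simp only [Finset.mem_filter, Finset.mem_product] at ht
        simp only [Finset.mem_biUnion, Finset.mem_product, Finset.mem_singleton, nbhd,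
          Finset.mem_filter]
        exact ⟨t.1, ht.1.1, rfl, ⟨ht.1.2.1, ht.2.2.2.2.1⟩, ⟨ht.1.2.2, ht.2.2.2.2.2⟩⟩
    _ ≤ ∑ i ∈ Finset.Icc 1 N, ({i} ×ˢ (nbhd i ×ˢ nbhd i)).card := Finset.card_biUnion_le
    _ = ∑ i ∈ Finset.Icc 1 N, (nbhd i).card ^ 2 := by simp [Finset.card_product, sq]

lemma IsDyadicStratified.tripleCount_le {x : ℕ → ℝ} {n N : ℕ} (h : IsDyadicStratified x n)
    (hN : N ≤ 2 ^ n) {δ : ℝ} (hδ : 0 ≤ δ) :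
    (tripleCount x δ N : ℝ) ≤ N * (3 * (2 * δ * 2 ^ n + 2)) ^ 2 := by
  have hsub : Finset.Icc 1 N ⊆ Finset.Icc 1 (2 ^ n) := Finset.Icc_subset_Icc_right hN
  have hx (i : ℕ) (hi : i ∈ Finset.Icc 1 N) := h.1 i (hsub hi)
  have hnbhd (i : ℕ) (hi : i ∈ Finset.Icc 1 N) :=
    card_filter_distToInt_le hx (h.2.mono (Finset.coe_subset.2 hsub)) (hx i hi) hδ
  calc (tripleCount x δ N : ℝ)
      ≤ ∑ i ∈ Finset.Icc 1 N,
          (((Finset.Icc 1 N).filter fun j => distToInt (x i - x j) ≤ δ).card : ℝ) ^ 2 := by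
        exact_mod_cast tripleCount_le_sum_sq x δ N
    _ ≤ ∑ _i ∈ Finset.Icc 1 N, (3 * (2 * δ * 2 ^ n + 2)) ^ 2 :=
        Finset.sum_le_sum fun i hi => pow_le_pow_left₀ (Nat.cast_nonneg _) (hnbhd i hi) 2
    _ = N * (3 * (2 * δ * 2 ^ n + 2)) ^ 2 := by simp

lemma two_pow_clog_le_two_mul {N : ℕ} (hN : 1 ≤ N) : 2 ^ Nat.clog 2 N ≤ 2 * N := by
  rcases hN.eq_or_lt with rfl | hN
  · simp
  · have := Nat.pow_pred_clog_lt_self one_lt_two hN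
    rw [← Nat.succ_pred_eq_of_pos (Nat.clog_pos one_lt_two hN), pow_succ]
    omega

lemma natCast_mul_sq_le_rpow {N : ℕ} (hN : 1 ≤ N) {α c : ℝ} (hα : 0 ≤ α) :
    (N : ℝ) * (c * (N : ℝ) ^ (1 - α)) ^ 2 ≤ c ^ 2 * (N : ℝ) ^ (3 - α) := by
  have hN' : (1 : ℝ) ≤ N := by exact_mod_cast hN
  have hle : (N : ℝ) ^ (1 - α) ≤ N := by
    simpa using Real.rpow_le_rpow_of_exponent_le hN' (by linarith : 1 - α ≤ 1)
  have hsplit : (N : ℝ) ^ (3 - α) = (N : ℝ) ^ (1 - α) * N * N := by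
    rw [show 3 - α = 1 - α + 1 + 1 by ring, Real.rpow_add (by positivity),
      Real.rpow_add (by positivity), Real.rpow_one]
  calc (N : ℝ) * (c * (N : ℝ) ^ (1 - α)) ^ 2
      = c ^ 2 * (N : ℝ) ^ (1 - α) * (N * (N : ℝ) ^ (1 - α)) := by ring
    _ ≤ c ^ 2 * (N : ℝ) ^ (1 - α) * (N * N) := by gcongr
    _ = c ^ 2 * (N : ℝ) ^ (3 - α) := by rw [hsplit]; ring

lemma IsDyadicStratified.tripleCount_le_rpow {x : ℕ → ℝ} {N : ℕ}
    (h : IsDyadicStratified x (Nat.clog 2 N)) (hN : 1 ≤ N) {α s : ℝ} (hα₀ : 0 ≤ α)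
    (hα₁ : α ≤ 1) (hs : 0 ≤ s) :
    (tripleCount x (s / (N : ℝ) ^ α) N : ℝ) ≤ (12 * s + 6) ^ 2 * (N : ℝ) ^ (3 - α) := by
  set n := Nat.clog 2 N
  have hNpos : (0 : ℝ) < N := by exact_mod_cast hN
  have h2n : (2 : ℝ) ^ n ≤ 2 * N := by exact_mod_cast two_pow_clog_le_two_mul hN
  have hone : (1 : ℝ) ≤ (N : ℝ) ^ (1 - α) :=
    Real.one_le_rpow (by exact_mod_cast hN) (by linarith)
  have hcells : 3 * (2 * (s / (N : ℝ) ^ α) * 2 ^ n + 2) ≤ (12 * s + 6) * (N : ℝ) ^ (1 - α) := by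
    have : s / (N : ℝ) ^ α * 2 ^ n ≤ 2 * s * (N : ℝ) ^ (1 - α) := by
      calc s / (N : ℝ) ^ α * 2 ^ n ≤ s / (N : ℝ) ^ α * (2 * N) := by gcongr
        _ = 2 * s * (N : ℝ) ^ (1 - α) := by
          rw [Real.rpow_sub hNpos, Real.rpow_one]; field_simp
    nlinarith
  calc (tripleCount x (s / (N : ℝ) ^ α) N : ℝ)
      ≤ N * (3 * (2 * (s / (N : ℝ) ^ α) * 2 ^ n + 2)) ^ 2 :=
        h.tripleCount_le (Nat.le_pow_clog one_lt_two N) (by positivity)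
    _ ≤ N * ((12 * s + 6) * (N : ℝ) ^ (1 - α)) ^ 2 := by gcongr
    _ ≤ (12 * s + 6) ^ 2 * (N : ℝ) ^ (3 - α) := natCast_mul_sq_le_rpow hN hα₀

lemma ae_mem_of_map_eq_restrict {Ω β : Type*} [MeasurableSpace Ω] [MeasurableSpace β]
    {P : Measure Ω} {μ : Measure β} {Y : Ω → β} (hY : AEMeasurable Y P) {S : Set β}
    (hS : MeasurableSet S) (hmap : P.map Y = μ.restrict S) : ∀ᵐ ω ∂P, Y ω ∈ S :=
  ae_of_ae_map hY (hmap ▸ ae_restrict_mem hS)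

/-- For sequential jittered sampling, the expected number of distinct triples
`(i, j, k)` with `‖X i - X j‖ ≤ s/N^α` and `‖X i - X k‖ ≤ s/N^α` is `O(N^(3-α))`. -/
theorem seqJitter_tripleCount_expectation
    {Ω : Type*} [MeasurableSpace Ω] (P : Measure Ω) (X : ℕ → Ω → ℝ)
    (hX : IsSeqJitter P X) (α s : ℝ) (hα : α ∈ Set.Ioo (0 : ℝ) 1) (hs : 0 < s) :
    ∃ C : ℝ, ∀ N : ℕ, 1 ≤ N →
      ∫ ω, (tripleCount (fun j => X j ω) (s / (N : ℝ) ^ α) N : ℝ) ∂P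
        ≤ C * (N : ℝ) ^ ((3 : ℝ) - α) := by
  obtain ⟨hP, B, π, Z, -, -, hZ, -, -, -, hZlaw, hX₁, hX₂, hrec⟩ := hX
  refine ⟨(12 * s + 6) ^ 2, fun N hN => ?_⟩
  have hZ_mem : ∀ᵐ ω ∂P, ∀ m k, Z m k ω ∈ Set.Ico (0 : ℝ) 1 := by
    simp only [ae_all_iff]
    exact fun m k => ae_mem_of_map_eq_restrict (hZ m k).aemeasurable measurableSet_Ico (hZlaw m k)
  have hbound : ∀ᵐ ω ∂P, (tripleCount (fun j => X j ω) (s / (N : ℝ) ^ α) N : ℝ)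
      ≤ (12 * s + 6) ^ 2 * (N : ℝ) ^ ((3 : ℝ) - α) := by
    filter_upwards [hZ_mem] with ω hω
    exact (isDyadicStratified_of_jitter (B ω) _ (π · ω) hω (hX₁ ω) (hX₂ ω)
      (fun n hn k => hrec n hn k ω) _).tripleCount_le_rpow hN hα.1.le hα.2.le hs.le
  calc ∫ ω, (tripleCount (fun j => X j ω) (s / (N : ℝ) ^ α) N : ℝ) ∂P
      ≤ ∫ _, (12 * s + 6) ^ 2 * (N : ℝ) ^ ((3 : ℝ) - α) ∂P :=
        integral_mono_of_nonneg (ae_of_all _ fun _ => by positivity) (integrable_const _) hbound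
    _ = (12 * s + 6) ^ 2 * (N : ℝ) ^ ((3 : ℝ) - α) := by simp
end
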